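/- Let Z be a standard Borel space, let A ⊆ Z × H be a Borel set such that for every z ∈ Z the section A_z is nonempty, compact, and norm separable, and let ε > 0. Define sets A^ξ ⊆ Z × H for countable ordinals ξ by transfinite recursion: A^0 = A; A^{ξ+1} = { (z,f) : f ∈ 𝔻_ε((A^ξ)_z) }; and A^λ = ⋂_{ζ<λ} A^ζ for limit λ. Then: (1) for every countable ordinal ξ, the set A^ξ is a Borel subset of A and for every z ∈ Z the section (A^ξ)_z is compact, with (A^ξ)_z = 𝔻_ε^{(ξ)}(A_z); and (2) for every (z,f) ∈ A there exists a unique countable ordinal ξ such that (z,f) ∈ A^ξ \ A^{ξ+1}, equivalently f ∈ (A^ξ)_z \ 𝔻_ε((A^ξ)_z). -/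

import Mathlib

noncomputable section

/-- `H = [-1,1]^ℕ`, the product of countably many copies of `[-1,1]`, with the
product topology (and its Borel σ-algebra). -/
abbrev H : Type := ℕ → Set.Icc (-1 : ℝ) 1

/-- The supremum distance `‖f − g‖_∞ = sup_n |f(n) − g(n)|` on `H`. -/
noncomputable def normDist (f g : H) : ℝ := ⨆ n, |(f n : ℝ) - (g n : ℝ)|

/-- The norm diameter of `S ⊆ H`: `sup {‖f − g‖_∞ : f, g ∈ S}`. -/
noncomputable def normDiam (S : Set H) : ℝ :=
  sSup {d : ℝ | ∃ f ∈ S, ∃ g ∈ S, d = normDist f g}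

/-- `S ⊆ H` is norm separable: separable w.r.t. the metric `(f,g) ↦ ‖f − g‖_∞`. -/
def NormSeparable (S : Set H) : Prop :=
  ∃ D : Set H, D.Countable ∧ D ⊆ S ∧ ∀ f ∈ S, ∀ δ : ℝ, 0 < δ → ∃ g ∈ D, normDist f g < δ

/-- The Szlenk-type derivative `𝔻_ε(K)`: points of `K` all of whose open neighbourhoods `U`
have `K ∩ U` of norm diameter greater than `ε`. -/
def Dstar (ε : ℝ) (K : Set H) : Set H :=
  {f | f ∈ K ∧ ∀ U : Set H, IsOpen U → f ∈ U → ε < normDiam (K ∩ U)}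

/-- Transfinite iterates of a derivation on sets: `D^{(0)}(K) = K`,
`D^{(ξ+1)}(K) = D(D^{(ξ)}(K))`, and intersections at limit stages. -/
noncomputable def derivIter {α : Type*} (D : Set α → Set α) (K : Set α) (o : Ordinal) :
    Set α :=
  Ordinal.limitRecOn o K (fun _ ih => D ih) (fun o _ ih => ⋂ (ζ : Ordinal) (h : ζ < o), ih ζ h)

/-- The transfinite sequence of sets `A^ξ ⊆ Z × H`: `A^0 = A`,
`A^{ξ+1} = {(z,f) : f ∈ 𝔻_ε((A^ξ)_z)}`, and intersections at limit stages. -/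
noncomputable def Aseq {Z : Type} (A : Set (Z × H)) (ε : ℝ) (ξ : Ordinal) : Set (Z × H) :=
  Ordinal.limitRecOn ξ A
    (fun _ ih => {p : Z × H | p.2 ∈ Dstar ε {f : H | (p.1, f) ∈ ih}})
    (fun o _ ih => ⋂ (ζ : Ordinal) (h : ζ < o), ih ζ h)

/-!
Borel measurability of `A^ξ` is proved by induction on `ξ`. Membership in `𝔻_ε(K)` only has to be
tested on a countable basis of `H`, and the sup-distance is lower semicontinuous for the product
topology, so the successor step reduces to the projection onto `Z` of a Borel subset of
`Z × (H × H)` with closed sections. Such projections are Borel (Novikov): after pulling back to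
Cantor space, Novikov's separation theorem for countably many analytic sets gives Borel envelopes
`D n` of the sets `{(x, c) | B_x meets the n-cylinder of c}`, the Lusin separation theorem gives
Borel sets between the projection of `B ∩ (X × [s])` and `{x | {x} × [s] ⊆ D |s|}`, and König's
lemma expresses the projection through these countably many Borel sets.

For the rank, the derivatives `𝔻_ε^{(ξ)}(A_z)` form a decreasing transfinite sequence of closed
subsets of the second-countable space `H`, so it stabilises at a countable `ξ`. The stable set is
empty by the Baire category theorem: a nonempty compact set covered by countably many closed
`ε/3`-balls of the sup-distance has a relatively open piece of norm diameter at most `2ε/3`.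
-/

open Set MeasureTheory TopologicalSpace Filter Topology PiNat

lemma PiNat.eventually_cylinder_subset {E : ℕ → Type*} [∀ n, TopologicalSpace (E n)]
    [∀ n, DiscreteTopology (E n)] {x : ∀ n, E n} {U : Set (∀ n, E n)} (hU : IsOpen U)
    (hx : x ∈ U) : ∀ᶠ n in atTop, cylinder x n ⊆ U := by
  obtain ⟨_, ⟨y, n, rfl⟩, hxy, hyU⟩ :=
    (isTopologicalBasis_cylinders E).exists_subset_of_mem_open hx hU
  rw [mem_cylinder_iff_eq] at hxy
  exact eventually_atTop.2 ⟨n, fun k hk => (cylinder_anti x hk).trans (hxy ▸ hyU)⟩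

lemma PiNat.exists_cylinder_eq_of_nested {E : ℕ → Type*} {x : ℕ → ∀ n, E n}
    (hx : ∀ m, x (m + 1) ∈ cylinder (x m) m) : ∃ y, ∀ m, cylinder y m = cylinder (x m) m := by
  have hmono : ∀ m m', m ≤ m' → x m' ∈ cylinder (x m) m := by
    intro m m' hmm'
    induction m', hmm' using Nat.le_induction with
    | base => exact self_mem_cylinder _ _
    | succ m' hmm' ih =>
      rw [mem_cylinder_iff_eq] at ih ⊢
      rw [← ih, ← mem_cylinder_iff_eq]
      exact cylinder_anti _ hmm' (hx m')
  refine ⟨fun j => x (j + 1) j, fun m => mem_cylinder_iff_eq.1 fun j hj => ?_⟩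
  exact (mem_cylinder_iff.1 (hmono (j + 1) m hj) j j.lt_succ_self).symm

section NovikovSeparation

variable {α : Type*} {f : ℕ → (ℕ → ℕ) → α}

/-- All the `f n` evaluated at one point of `ℕ → ℕ`: the argument of `f n` is read off the
coordinates `Nat.pair n j`, so that fixing coordinate `m` of the point only constrains
`f (Nat.unpair m).1`. -/
def splitArg (f : ℕ → (ℕ → ℕ) → α) (n : ℕ) (x : ℕ → ℕ) : α := f n fun j => x (Nat.pair n j)

lemma range_splitArg (n : ℕ) : range (splitArg f n) = range (f n) := by
  refine (range_comp_subset_range _ _).antisymm ?_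
  rintro _ ⟨y, rfl⟩
  exact ⟨fun k => y (Nat.unpair k).2, by simp⟩

lemma continuous_splitArg [TopologicalSpace α] (hf : ∀ n, Continuous (f n)) (n : ℕ) :
    Continuous (splitArg f n) :=
  (hf n).comp (continuous_pi fun _ => continuous_apply _)

lemma splitArg_update {n m : ℕ} (hn : n ≠ (Nat.unpair m).1) (x : ℕ → ℕ) (i : ℕ) :
    splitArg f n (Function.update x m i) = splitArg f n x := by
  refine congrArg (f n) (funext fun j => Function.update_of_ne ?_ _ _)
  rintro rfl
  simp at hn

variable [MeasurableSpace α]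

def MeasurablySeparableSeq (s : ℕ → Set α) : Prop :=
  ∃ t : ℕ → Set α, (∀ n, MeasurableSet (t n)) ∧ (∀ n, s n ⊆ t n) ∧ ⋂ n, t n = ∅

lemma MeasurablySeparableSeq.of_iUnion {ι : Type*} [Countable ι]
    {s : ℕ → Set α} {s' : ι → ℕ → Set α} (n₀ : ℕ) (h₀ : s n₀ ⊆ ⋃ i, s' i n₀)
    (h : ∀ n ≠ n₀, ∀ i, s n ⊆ s' i n) (hs' : ∀ i, MeasurablySeparableSeq (s' i)) :
    MeasurablySeparableSeq s := by
  classical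
  choose t ht hst hte using hs'
  refine ⟨fun n => if n = n₀ then ⋃ i, t i n else ⋂ i, t i n, fun n => ?_, fun n => ?_, ?_⟩
  · dsimp only
    split_ifs
    exacts [.iUnion fun i => ht i n, .iInter fun i => ht i n]
  · dsimp only
    split_ifs with hn
    · subst hn; exact h₀.trans (iUnion_mono fun i => hst i n)
    · exact subset_iInter fun i => (h n hn i).trans (hst i n)
  · refine eq_empty_of_forall_notMem fun x hx => ?_
    have hx' := mem_iInter.1 hx
    obtain ⟨i, hi⟩ := mem_iUnion.1 (by simpa using hx' n₀)
    have : x ∈ ⋂ n, t i n := mem_iInter.2 fun n => by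
      by_cases hn : n = n₀
      · exact hn ▸ hi
      · exact (by simpa [hn] using hx' n : ∀ i, x ∈ t i n) i
    simp [hte i] at this

lemma MeasurablySeparable.measurablySeparableSeq {s : ℕ → Set α} {n m : ℕ}
    (hnm : n ≠ m) (h : MeasurablySeparable (s n) (s m)) : MeasurablySeparableSeq s := by
  classical
  obtain ⟨u, hsu, hsmu, hu⟩ := h
  refine ⟨fun k => if k = n then u else if k = m then uᶜ else univ, fun k => ?_, fun k => ?_, ?_⟩
  · dsimp only
    split_ifs
    exacts [hu, hu.compl, .univ]
  · dsimp only
    split_ifs with hkn hkm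
    · exact hkn ▸ hsu
    · exact hkm ▸ hsmu.subset_compl_right
    · exact subset_univ _
  · refine eq_empty_of_forall_notMem fun x hx => ?_
    have hx' := mem_iInter.1 hx
    have hxn : x ∈ u := by simpa using hx' n
    have hxm : x ∉ u := by simpa [hnm.symm] using hx' m
    exact hxm hxn

lemma exists_cylinder_not_measurablySeparableSeq {x : ℕ → ℕ} {m : ℕ}
    (h : ¬ MeasurablySeparableSeq fun n => splitArg f n '' cylinder x m) :
    ∃ y ∈ cylinder x m, ¬ MeasurablySeparableSeq fun n => splitArg f n '' cylinder y (m + 1) := by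
  by_contra! hy
  refine h (.of_iUnion (s' := fun i n => splitArg f n '' cylinder (Function.update x m i) (m + 1))
    (Nat.unpair m).1 ?_ ?_ fun i => hy _ (update_mem_cylinder x m i))
  · rw [← image_iUnion]
    exact image_mono (iUnion_cylinder_update x m).ge
  · rintro n hn i _ ⟨z, hz, rfl⟩
    refine ⟨Function.update z m i, mem_cylinder_iff.2 fun j hj => ?_, splitArg_update hn z i⟩
    rcases eq_or_ne j m with rfl | hjm
    · simp
    · simpa [hjm] using mem_cylinder_iff.1 hz j (by omega)

variable [TopologicalSpace α] [T2Space α] [OpensMeasurableSpace α]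

theorem measurablySeparableSeq_range (hf : ∀ n, Continuous (f n)) (h : ⋂ n, range (f n) = ∅) :
    MeasurablySeparableSeq fun n => range (f n) := by
  -- As for Lusin's theorem: refining one coordinate at a time keeps the family non-separable,
  -- and at the limit point `y` all the `g n y` agree, since otherwise two disjoint open sets
  -- would separate two of the images of a small cylinder around `y`.
  set g := splitArg f
  let Bad (x : ℕ → ℕ) (m : ℕ) : Prop := ¬ MeasurablySeparableSeq fun n => g n '' cylinder x m
  by_contra hsep
  choose! next hnext using fun x m =>
    exists_cylinder_not_measurablySeparableSeq (f := f) (x := x) (m := m)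
  let x : ℕ → ℕ → ℕ := fun m => Nat.rec (fun _ => 0) (fun m xm => next xm m) m
  have hbad : ∀ m, Bad (x m) m := by
    intro m
    induction m with
    | zero => simpa [Bad, cylinder_zero, g, range_splitArg] using hsep
    | succ m ih => exact (hnext (x m) m ih).2
  obtain ⟨y, hy⟩ := exists_cylinder_eq_of_nested fun m => (hnext (x m) m (hbad m)).1
  have hconst : ∀ n n', g n y = g n' y := by
    intro n n'
    by_contra hne
    have hnn' : n ≠ n' := by rintro rfl; exact hne rfl
    obtain ⟨U, V, hU, hV, hyU, hyV, hUV⟩ := t2_separation hne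
    obtain ⟨m, hmU, hmV⟩ :=
      ((eventually_cylinder_subset (hU.preimage (continuous_splitArg hf n)) hyU).and
        (eventually_cylinder_subset (hV.preimage (continuous_splitArg hf n')) hyV)).exists
    refine hbad m (MeasurablySeparable.measurablySeparableSeq hnn'
      ⟨U, ?_, hUV.symm.mono_left ?_, hU.measurableSet⟩) <;>
      simpa [← hy m, image_subset_iff]
  refine (h ▸ mem_iInter.2 fun n => ?_ : g 0 y ∈ (∅ : Set α))
  exact range_splitArg (f := f) n ▸ ⟨y, hconst n 0⟩

theorem AnalyticSet.measurablySeparableSeq {s : ℕ → Set α} (hs : ∀ n, AnalyticSet (s n))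
    (h : ⋂ n, s n = ∅) : MeasurablySeparableSeq s := by
  by_cases hempty : ∃ n, s n = ∅
  · obtain ⟨n, hn⟩ := hempty
    exact MeasurablySeparable.measurablySeparableSeq (m := n + 1) (by omega)
      ⟨∅, hn.subset, disjoint_empty _, .empty⟩
  push Not at hempty
  choose f hf hfs using fun n => by
    have hsn := hs n
    rw [AnalyticSet] at hsn
    exact hsn.resolve_left (hempty n).ne_empty
  simpa only [hfs] using measurablySeparableSeq_range hf (by simpa only [hfs] using h)

end NovikovSeparation

section Projection

def prefixOf (n : ℕ) (c : ℕ → Bool) : Fin n → Bool := fun i => c i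

lemma continuous_prefixOf (n : ℕ) : Continuous (prefixOf n) :=
  continuous_pi fun _ => continuous_apply _

lemma exists_forall_prefixOf {p : (n : ℕ) → (Fin n → Bool) → Prop}
    (h : ∀ n, ∃ c, ∀ k ≤ n, p k (prefixOf k c)) : ∃ c, ∀ k, p k (prefixOf k c) := by
  let W (n : ℕ) : Set (ℕ → Bool) := ⋂ (k) (_ : k ≤ n), prefixOf k ⁻¹' {s | p k s}
  have hW (n : ℕ) : IsClosed (W n) :=
    isClosed_biInter fun k _ => (isClosed_discrete _).preimage (continuous_prefixOf k)
  obtain ⟨c, hc⟩ := IsCompact.nonempty_iInter_of_sequence_nonempty_isCompact_isClosed W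
    (fun n => biInter_mono (fun k hk => le_trans hk n.le_succ) fun _ _ => subset_rfl)
    (fun n => by simpa [W] using h n) (hW 0).isCompact hW
  refine ⟨c, fun k => ?_⟩
  have hck := mem_iInter.1 hc k
  simp only [W, mem_iInter, mem_preimage] at hck
  exact hck k le_rfl

variable {X : Type*}

def prefixHull (B : Set (X × (ℕ → Bool))) (n : ℕ) : Set (X × (ℕ → Bool)) :=
  {p | ∃ c, prefixOf n c = prefixOf n p.2 ∧ (p.1, c) ∈ B}

lemma subset_prefixHull (B : Set (X × (ℕ → Bool))) (n : ℕ) : B ⊆ prefixHull B n :=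
  fun p hp => ⟨p.2, rfl, hp⟩

lemma iInter_prefixHull {B : Set (X × (ℕ → Bool))} (hsec : ∀ x, IsClosed {c | (x, c) ∈ B}) :
    ⋂ n, prefixHull B n = B := by
  refine (subset_iInter (subset_prefixHull B)).antisymm' fun ⟨x, c⟩ hxc => ?_
  choose c' hc'c hc'B using mem_iInter.1 hxc
  show c ∈ {c | (x, c) ∈ B}
  refine (hsec x).mem_of_tendsto (b := atTop) (tendsto_pi_nhds.2 fun i => ?_) (.of_forall hc'B)
  exact tendsto_atTop_of_eventually_const (i₀ := i + 1) fun n hn => congrFun (hc'c n) ⟨i, hn⟩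

variable [TopologicalSpace X] [PolishSpace X] [MeasurableSpace X] [BorelSpace X]

lemma measurableSet_prefixOf_eq (n : ℕ) (s : Fin n → Bool) :
    MeasurableSet {c : ℕ → Bool | prefixOf n c = s} :=
  ((isOpen_discrete {s}).preimage (continuous_prefixOf n)).measurableSet

lemma analyticSet_prefixHull_diff {B : Set (X × (ℕ → Bool))} (hB : MeasurableSet B) (n : ℕ) :
    AnalyticSet (prefixHull B n \ B) := by
  have : prefixHull B n \ B = Prod.fst '' {q : (X × (ℕ → Bool)) × (ℕ → Bool) |
      prefixOf n q.2 = prefixOf n q.1.2 ∧ (q.1.1, q.2) ∈ B ∧ q.1 ∉ B} := by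
    ext ⟨x, c⟩
    simp only [prefixHull]
    aesop
  rw [this]
  refine MeasurableSet.analyticSet_image ?_ measurable_fst
  refine (isClosed_eq ((continuous_prefixOf n).comp continuous_snd)
    ((continuous_prefixOf n).comp (continuous_snd.comp continuous_fst))).measurableSet.inter
    ((hB.preimage (measurable_fst.fst.prodMk measurable_snd)).inter
      (hB.preimage measurable_fst).compl)

lemma exists_measurableSet_prefixHull_subset {B : Set (X × (ℕ → Bool))} (hB : MeasurableSet B)
    (hsec : ∀ x, IsClosed {c | (x, c) ∈ B}) :
    ∃ D : ℕ → Set (X × (ℕ → Bool)), (∀ n, MeasurableSet (D n)) ∧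
      (∀ n, prefixHull B n ⊆ D n) ∧ ⋂ n, D n ⊆ B := by
  obtain ⟨t, ht, hst, hte⟩ := AnalyticSet.measurablySeparableSeq (analyticSet_prefixHull_diff hB)
    (eq_empty_of_forall_notMem fun p hp => (mem_iInter.1 hp 0).2 <|
      iInter_prefixHull hsec ▸ mem_iInter.2 fun n => (mem_iInter.1 hp n).1)
  refine ⟨fun n => t n ∪ B, fun n => (ht n).union hB, fun n p hp => ?_, fun p hp => ?_⟩
  · by_cases hpB : p ∈ B
    exacts [.inr hpB, .inl (hst n ⟨hp, hpB⟩)]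
  · by_contra hpB
    have : p ∈ ⋂ n, t n := mem_iInter.2 fun n => (mem_iInter.1 hp n).resolve_right hpB
    simp [hte] at this

lemma exists_measurableSet_separating_prefix {B D : Set (X × (ℕ → Bool))} {n : ℕ}
    (hB : MeasurableSet B) (hD : MeasurableSet D) (hBD : prefixHull B n ⊆ D) (s : Fin n → Bool) :
    ∃ M : Set X, MeasurableSet M ∧ {x | ∃ c, (x, c) ∈ B ∧ prefixOf n c = s} ⊆ M ∧
      ∀ x ∈ M, ∀ c, prefixOf n c = s → (x, c) ∈ D := by
  have hP : AnalyticSet {x | ∃ c, (x, c) ∈ B ∧ prefixOf n c = s} := by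
    convert (hB.inter (MeasurableSet.univ.prod (measurableSet_prefixOf_eq n s)))
      |>.analyticSet_image measurable_fst using 1
    ext x
    simp
  have hQ : AnalyticSet {x | ∃ c, (x, c) ∉ D ∧ prefixOf n c = s} := by
    convert (hD.compl.inter (MeasurableSet.univ.prod (measurableSet_prefixOf_eq n s)))
      |>.analyticSet_image measurable_fst using 1
    ext x
    simp
  obtain ⟨M, hPM, hQM, hM⟩ := hP.measurablySeparable hQ <| disjoint_left.2 <| by
    rintro x ⟨c, hxc, hcs⟩ ⟨c', hxc', hc's⟩
    exact hxc' (hBD ⟨c, hcs.trans hc's.symm, hxc⟩)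
  refine ⟨M, hM, hPM, fun x hxM c hcs => ?_⟩
  by_contra hxc
  exact disjoint_left.1 hQM ⟨c, hxc, hcs⟩ hxM

theorem MeasurableSet.image_fst_of_isClosed_sections_cantor {B : Set (X × (ℕ → Bool))}
    (hB : MeasurableSet B) (hsec : ∀ x, IsClosed {c | (x, c) ∈ B}) :
    MeasurableSet (Prod.fst '' B) := by
  obtain ⟨D, hDm, hBD, hDB⟩ := exists_measurableSet_prefixHull_subset hB hsec
  choose M hMm hBM hMD using fun n =>
    exists_measurableSet_separating_prefix hB (hDm n) (hBD n)
  -- `⊇` is König's lemma: it gives one `c` with `x ∈ M k (prefixOf k c)` for all `k`.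
  have hproj : Prod.fst '' B = ⋂ n, ⋃ c : ℕ → Bool, ⋂ (k) (_ : k ≤ n), M k (prefixOf k c) := by
    ext x
    simp only [mem_image, mem_iInter, mem_iUnion]
    constructor
    · rintro ⟨⟨x, c⟩, hxc, rfl⟩ n
      exact ⟨c, fun k _ => hBM k _ ⟨c, hxc, rfl⟩⟩
    · intro h
      obtain ⟨c, hc⟩ := exists_forall_prefixOf (p := fun k s => x ∈ M k s) h
      exact ⟨(x, c), hDB (mem_iInter.2 fun k => hMD k _ x (hc k) c rfl), rfl⟩
  -- the union over `c` only depends on `prefixOf n c`, which takes finitely many values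
  have hunion (n : ℕ) : ⋃ c : ℕ → Bool, ⋂ (k) (_ : k ≤ n), M k (prefixOf k c) =
      ⋃ s ∈ range (prefixOf n), ⋂ (k) (hk : k ≤ n), M k fun i => s (Fin.castLE hk i) := by
    rw [biUnion_range]
    rfl
  rw [hproj]
  exact .iInter fun n => hunion n ▸
    .biUnion (to_countable _) fun s _ => .iInter fun k => .iInter fun hk => hMm _ _

variable {Y : Type*} [TopologicalSpace Y] [CompactSpace Y] [MetrizableSpace Y]
  [MeasurableSpace Y] [BorelSpace Y]

theorem MeasurableSet.image_fst_of_isClosed_sections {B : Set (X × Y)} (hB : MeasurableSet B)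
    (hsec : ∀ x, IsClosed {y | (x, y) ∈ B}) : MeasurableSet (Prod.fst '' B) := by
  rcases isEmpty_or_nonempty Y with hY | hY
  · simp [eq_empty_of_isEmpty B]
  let := metrizableSpaceMetric Y
  obtain ⟨q, hq, hqs⟩ := exists_nat_bool_continuous_surjective_of_compact Y
  have : Prod.fst '' B = Prod.fst '' (Prod.map id q ⁻¹' B) := by
    ext x
    constructor
    · rintro ⟨⟨x, y⟩, hxy, rfl⟩
      obtain ⟨c, rfl⟩ := hqs y
      exact ⟨(x, c), hxy, rfl⟩
    · rintro ⟨⟨x, c⟩, hxc, rfl⟩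
      exact ⟨(x, q c), hxc, rfl⟩
  rw [this]
  exact (hB.preimage (measurable_id.prodMap hq.measurable)).image_fst_of_isClosed_sections_cantor
    fun x => (hsec x).preimage hq

theorem MeasurableSet.setOf_exists_mem_of_isOpen {B : Set (X × Y)} (hB : MeasurableSet B)
    (hsec : ∀ x, IsClosed {y | (x, y) ∈ B}) {U : Set Y} (hU : IsOpen U) :
    MeasurableSet {x | ∃ y ∈ U, (x, y) ∈ B} := by
  obtain ⟨F, hF, hUF⟩ := isGδ_iff_eq_iInter_nat.1 hU.isClosed_compl.isGδ
  have hU' : U = ⋃ n, (F n)ᶜ := by rw [← compl_iInter, ← hUF, compl_compl]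
  have : {x | ∃ y ∈ U, (x, y) ∈ B} = ⋃ n, Prod.fst '' (B ∩ univ ×ˢ (F n)ᶜ) := by
    ext x
    rw [hU']
    constructor
    · rintro ⟨y, hy, hxy⟩
      obtain ⟨n, hyn⟩ := mem_iUnion.1 hy
      exact mem_iUnion.2 ⟨n, (x, y), ⟨hxy, mem_univ _, hyn⟩, rfl⟩
    · intro hx
      obtain ⟨n, ⟨x, y⟩, ⟨hxy, -, hyn⟩, rfl⟩ := mem_iUnion.1 hx
      exact ⟨y, mem_iUnion.2 ⟨n, hyn⟩, hxy⟩
  rw [this]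
  refine .iUnion fun n => (hB.inter (MeasurableSet.univ.prod (hF n).measurableSet.compl))
    |>.image_fst_of_isClosed_sections fun x => ?_
  convert (hsec x).inter (hF n).isClosed_compl using 1
  ext y
  simp

end Projection

section TransfiniteIteration

lemma countable_setOf_succ_ne {ι X : Type*} [LinearOrder ι] [SuccOrder ι] [TopologicalSpace X]
    [SecondCountableTopology X] {F : ι → Set X} (hF : Antitone F) (hcl : ∀ i, IsClosed (F i)) :
    {i | F (Order.succ i) ≠ F i}.Countable := by
  set S := {i | F (Order.succ i) ≠ F i}
  have hV : ∀ i ∈ S, ∃ V ∈ countableBasis X,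
      (V ∩ F i).Nonempty ∧ Disjoint V (F (Order.succ i)) := by
    intro i hi
    obtain ⟨x, hxi, hxs⟩ : ∃ x ∈ F i, x ∉ F (Order.succ i) :=
      not_subset.1 fun h => hi ((hF (Order.le_succ i)).antisymm h)
    obtain ⟨V, hV, hxV, hVs⟩ := (isBasis_countableBasis X).exists_subset_of_mem_open hxs
      (hcl _).isOpen_compl
    exact ⟨V, hV, ⟨x, hxV, hxi⟩, subset_compl_iff_disjoint_right.1 hVs⟩
  choose! V hVb hVF hVs using hV
  have hlt : ∀ i ∈ S, ∀ j ∈ S, i < j → V i ≠ V j := by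
    intro i hi j hj hij hVij
    obtain ⟨x, hxV, hxF⟩ := hVF j hj
    exact disjoint_left.1 (hVs i hi) (hVij ▸ hxV) (hF (Order.succ_le_of_lt hij) hxF)
  refine MapsTo.countable_of_injOn hVb (fun i hi j hj hij => ?_) (countable_countableBasis X)
  rcases lt_trichotomy i j with h | h | h
  exacts [absurd hij (hlt i hi j hj h), h, absurd hij.symm (hlt j hj i hi h)]

lemma Ordinal.countable_Iio {ξ : Ordinal} (hξ : ξ.card ≤ Cardinal.aleph0) :
    (Iio ξ).Countable := by
  rwa [← Cardinal.le_aleph0_iff_set_countable, Cardinal.mk_Iio_ordinal, Cardinal.lift_le_aleph0]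

lemma Ordinal.exists_card_le_aleph0_notMem {S : Set Ordinal} (hS : S.Countable) :
    ∃ ξ, ξ.card ≤ Cardinal.aleph0 ∧ ξ ∉ S := by
  by_contra! h
  have hcount : (Iio (Order.succ Cardinal.aleph0).ord).Countable :=
    hS.mono fun ξ hξ => h ξ (Cardinal.card_le_iff.2 hξ)
  have := Cardinal.le_aleph0_iff_set_countable.2 hcount
  rw [Cardinal.mk_Iio_ordinal, Cardinal.card_ord, Cardinal.lift_le_aleph0] at this
  exact (Order.lt_succ Cardinal.aleph0).not_ge this

variable {β : Type*} (D : Set β → Set β) (K : Set β)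

lemma derivIter_zero : derivIter D K 0 = K := Ordinal.limitRecOn_zero ..

lemma derivIter_add_one (ξ : Ordinal) : derivIter D K (ξ + 1) = D (derivIter D K ξ) :=
  Ordinal.limitRecOn_add_one ..

lemma derivIter_limit {ξ : Ordinal} (hξ : Order.IsSuccLimit ξ) :
    derivIter D K ξ = ⋂ ζ < ξ, derivIter D K ζ :=
  Ordinal.limitRecOn_limit _ _ _ _ hξ

variable {D K}

lemma derivIter_antitone (hD : ∀ S, D S ⊆ S) : Antitone (derivIter D K) := by
  intro ζ ξ h
  induction ξ using Ordinal.limitRecOn with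
  | zero => rw [nonpos_iff_eq_zero.1 h]
  | add_one ξ ih =>
    rcases h.lt_or_eq with h | rfl
    · rw [derivIter_add_one]
      exact (hD _).trans (ih (Order.lt_add_one_iff.1 h))
    · rfl
  | limit ξ hξ ih =>
    rcases h.lt_or_eq with h | rfl
    · rw [derivIter_limit D K hξ]
      exact biInter_subset_of_mem h
    · rfl

lemma isClosed_derivIter [TopologicalSpace β] (hD : ∀ S, IsClosed S → IsClosed (D S))
    (hK : IsClosed K) (ξ : Ordinal) : IsClosed (derivIter D K ξ) := by
  induction ξ using Ordinal.limitRecOn with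
  | zero => rwa [derivIter_zero]
  | add_one ξ ih => exact derivIter_add_one D K ξ ▸ hD _ ih
  | limit ξ hξ ih => exact derivIter_limit D K hξ ▸ isClosed_biInter ih

lemma exists_lt_mem_derivIter_diff {x : β} (hx : x ∈ K) {ξ : Ordinal}
    (hξ : x ∉ derivIter D K ξ) : ∃ η < ξ, x ∈ derivIter D K η \ derivIter D K (η + 1) := by
  induction ξ using Ordinal.limitRecOn with
  | zero => exact absurd hx (derivIter_zero D K ▸ hξ)
  | add_one ξ ih =>
    by_cases hxξ : x ∈ derivIter D K ξ
    · exact ⟨ξ, Order.lt_add_one_iff.2 le_rfl, hxξ, hξ⟩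
    · obtain ⟨η, hη, hxη⟩ := ih hxξ
      exact ⟨η, hη.trans (Order.lt_add_one_iff.2 le_rfl), hxη⟩
  | limit ξ hξlim ih =>
    rw [derivIter_limit D K hξlim] at hξ
    obtain ⟨ζ, hζ, hxζ⟩ : ∃ ζ < ξ, x ∉ derivIter D K ζ := by simpa using hξ
    obtain ⟨η, hη, hxη⟩ := ih ζ hζ hxζ
    exact ⟨η, hη.trans hζ, hxη⟩

lemma Antitone.eq_of_mem_diff_add_one {F : Ordinal → Set β} (hF : Antitone F) {x : β}
    {η η' : Ordinal} (h : x ∈ F η \ F (η + 1)) (h' : x ∈ F η' \ F (η' + 1)) : η = η' := by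
  rcases lt_trichotomy η η' with hlt | heq | hlt
  · exact absurd (hF (Order.add_one_le_of_lt hlt) h'.1) h.2
  · exact heq
  · exact absurd (hF (Order.add_one_le_of_lt hlt) h.1) h'.2

end TransfiniteIteration

section SupDistance

lemma abs_sub_le_two (x y : Icc (-1 : ℝ) 1) : |(x : ℝ) - y| ≤ 2 :=
  abs_sub_le_iff.2 ⟨by linarith [x.2.2, y.2.1], by linarith [x.2.1, y.2.2]⟩

lemma bddAbove_range_abs_sub (f g : H) : BddAbove (range fun n => |(f n : ℝ) - g n|) :=
  ⟨2, forall_mem_range.2 fun _ => abs_sub_le_two _ _⟩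

lemma normDist_le_two (f g : H) : normDist f g ≤ 2 :=
  ciSup_le fun _ => abs_sub_le_two _ _

lemma abs_sub_le_normDist (f g : H) (n : ℕ) : |(f n : ℝ) - g n| ≤ normDist f g :=
  le_ciSup (bddAbove_range_abs_sub f g) n

lemma normDist_comm (f g : H) : normDist f g = normDist g f := by
  simp only [normDist, abs_sub_comm]

lemma normDist_triangle (f g h : H) : normDist f h ≤ normDist f g + normDist g h :=
  ciSup_le fun n => (abs_sub_le _ _ _).trans
    (add_le_add (abs_sub_le_normDist f g n) (abs_sub_le_normDist g h n))

lemma lowerSemicontinuous_normDist : LowerSemicontinuous fun p : H × H => normDist p.1 p.2 :=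
  lowerSemicontinuous_ciSup (fun p => bddAbove_range_abs_sub p.1 p.2) fun n =>
    Continuous.lowerSemicontinuous <|
      ((continuous_subtype_val.comp ((continuous_apply n).comp continuous_fst)).sub
        (continuous_subtype_val.comp ((continuous_apply n).comp continuous_snd))).abs

lemma normDiam_le {S : Set H} {c : ℝ} (hc : 0 ≤ c) (h : ∀ f ∈ S, ∀ g ∈ S, normDist f g ≤ c) :
    normDiam S ≤ c :=
  Real.sSup_le (by rintro _ ⟨f, hf, g, hg, rfl⟩; exact h f hf g hg) hc

lemma normDist_le_normDiam {S : Set H} {f g : H} (hf : f ∈ S) (hg : g ∈ S) :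
    normDist f g ≤ normDiam S :=
  le_csSup ⟨2, by rintro _ ⟨f, -, g, -, rfl⟩; exact normDist_le_two f g⟩ ⟨f, hf, g, hg, rfl⟩

lemma normDiam_nonneg (S : Set H) : 0 ≤ normDiam S :=
  Real.sSup_nonneg <| by
    rintro _ ⟨f, -, g, -, rfl⟩
    exact (abs_nonneg _).trans (abs_sub_le_normDist f g 0)

lemma normDiam_mono {S T : Set H} (h : S ⊆ T) : normDiam S ≤ normDiam T :=
  normDiam_le (normDiam_nonneg T) fun _ hf _ hg => normDist_le_normDiam (h hf) (h hg)

lemma lt_normDiam_iff {S : Set H} {ε : ℝ} (hε : 0 ≤ ε) :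
    ε < normDiam S ↔ ∃ f ∈ S, ∃ g ∈ S, ε < normDist f g := by
  constructor
  · intro h
    by_contra! hS
    exact h.not_ge (normDiam_le hε hS)
  · rintro ⟨f, hf, g, hg, h⟩
    exact h.trans_le (normDist_le_normDiam hf hg)

end SupDistance

section Derivative

variable {ε : ℝ}

lemma Dstar_subset (ε : ℝ) (K : Set H) : Dstar ε K ⊆ K := fun _ h => h.1

lemma isClosed_Dstar {K : Set H} (hK : IsClosed K) : IsClosed (Dstar ε K) := by
  have : Dstar ε K = K ∩ (⋃₀ {U | IsOpen U ∧ normDiam (K ∩ U) ≤ ε})ᶜ := by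
    ext f
    exact and_congr_right fun _ =>
      ⟨fun h ⟨U, ⟨hU, hdiam⟩, hfU⟩ => (h U hU hfU).not_ge hdiam,
        fun h U hU hfU => lt_of_not_ge fun hdiam => h ⟨U, ⟨hU, hdiam⟩, hfU⟩⟩
  rw [this]
  exact hK.inter (isOpen_sUnion fun U hU => hU.1).isClosed_compl

lemma mem_Dstar_iff_countableBasis {K : Set H} {f : H} :
    f ∈ Dstar ε K ↔ f ∈ K ∧ ∀ V ∈ countableBasis H, f ∈ V → ε < normDiam (K ∩ V) := by
  refine and_congr_right fun _ => ⟨fun h V hV => h V (isOpen_of_mem_countableBasis hV),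
    fun h U hU hfU => ?_⟩
  obtain ⟨V, hV, hfV, hVU⟩ := (isBasis_countableBasis H).exists_subset_of_mem_open hfU hU
  exact (h V hV hfV).trans_le (normDiam_mono (inter_subset_inter_right K hVU))

lemma Dstar_ne_self (hε : 0 < ε) {K L : Set H} (hK : IsCompact K) (hKne : K.Nonempty)
    (hKL : K ⊆ L) (hL : NormSeparable L) : Dstar ε K ≠ K := by
  intro hfix
  obtain ⟨D, hD, -, hdense⟩ := hL
  have : CompactSpace K := isCompact_iff_compactSpace.1 hK
  have : Nonempty K := hKne.to_subtype
  have : Countable D := hD.to_subtype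
  let F (d : D) : Set K := {g | normDist g d ≤ ε / 3}
  have hF (d : D) : IsClosed (F d) :=
    (lowerSemicontinuous_normDist.isClosed_preimage (ε / 3)).preimage
      (continuous_subtype_val.prodMk continuous_const)
  have hcover : ⋃ d, F d = univ := eq_univ_of_forall fun g => by
    obtain ⟨d, hd, hgd⟩ := hdense g (hKL g.2) (ε / 3) (by positivity)
    exact mem_iUnion.2 ⟨⟨d, hd⟩, hgd.le⟩
  -- Baire: some `ε/3`-ball around a point of the norm-dense set has interior in `K`
  obtain ⟨d, g₀, hg₀⟩ := nonempty_interior_of_iUnion_of_closed hF hcover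
  obtain ⟨U, hU, hUeq⟩ := isOpen_induced_iff.1 (isOpen_interior (s := F d))
  have hsmall : ∀ g ∈ K ∩ U, normDist g d ≤ ε / 3 := by
    rintro g ⟨hgK, hgU⟩
    have : (⟨g, hgK⟩ : K) ∈ interior (F d) := by rw [← hUeq]; exact hgU
    exact (interior_subset this : (⟨g, hgK⟩ : K) ∈ F d)
  have hdiam : normDiam (K ∩ U) ≤ ε / 3 + ε / 3 := normDiam_le (by positivity) fun g hg g' hg' =>
    (normDist_triangle g d g').trans
      (add_le_add (hsmall g hg) (normDist_comm (d : H) g' ▸ hsmall g' hg'))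
  have hg₀U : (g₀ : H) ∈ U := by rw [← mem_preimage, hUeq]; exact hg₀
  have := (hfix.symm ▸ g₀.2 : (g₀ : H) ∈ Dstar ε K).2 U hU hg₀U
  linarith

lemma exists_derivIter_Dstar_eq_empty (hε : 0 < ε) {K : Set H} (hK : IsCompact K)
    (hsep : NormSeparable K) :
    ∃ ξ : Ordinal, ξ.card ≤ Cardinal.aleph0 ∧ derivIter (Dstar ε) K ξ = ∅ := by
  have hanti : Antitone (derivIter (Dstar ε) K) := derivIter_antitone (Dstar_subset ε)
  have hcl := isClosed_derivIter (D := Dstar ε) (fun _ => isClosed_Dstar) hK.isClosed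
  obtain ⟨ξ, hξ, hfix⟩ := Ordinal.exists_card_le_aleph0_notMem (countable_setOf_succ_ne hanti hcl)
  refine ⟨ξ, hξ, not_nonempty_iff_eq_empty.1 fun hne => Dstar_ne_self hε (hcl ξ).isCompact hne
    (by simpa only [derivIter_zero] using hanti (zero_le (a := ξ))) hsep ?_⟩
  simpa [← derivIter_add_one, Order.succ_eq_add_one] using hfix

variable {Z : Type*} [TopologicalSpace Z] [PolishSpace Z] [MeasurableSpace Z]
  [BorelSpace Z] {B : Set (Z × H)}

lemma measurableSet_setOf_lt_normDiam (hε : 0 ≤ ε) (hB : MeasurableSet B)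
    (hsec : ∀ z, IsClosed {f | (z, f) ∈ B}) {V : Set H} (hV : IsOpen V) :
    MeasurableSet {z | ε < normDiam ({f | (z, f) ∈ B} ∩ V)} := by
  let B₂ : Set (Z × (H × H)) := {p | (p.1, p.2.1) ∈ B ∧ (p.1, p.2.2) ∈ B}
  have hB₂ : MeasurableSet B₂ := (hB.preimage (measurable_fst.prodMk measurable_snd.fst)).inter
    (hB.preimage (measurable_fst.prodMk measurable_snd.snd))
  have hsec₂ (z : Z) : IsClosed {q : H × H | (z, q) ∈ B₂} :=
    ((hsec z).preimage continuous_fst).inter ((hsec z).preimage continuous_snd)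
  have hU : IsOpen {q : H × H | q.1 ∈ V ∧ q.2 ∈ V ∧ ε < normDist q.1 q.2} :=
    (hV.preimage continuous_fst).inter
      ((hV.preimage continuous_snd).inter (lowerSemicontinuous_normDist.isOpen_preimage ε))
  convert hB₂.setOf_exists_mem_of_isOpen hsec₂ hU using 1
  ext z
  simp only [lt_normDiam_iff hε]
  aesop

lemma measurableSet_setOf_mem_Dstar (hε : 0 ≤ ε) (hB : MeasurableSet B)
    (hsec : ∀ z, IsClosed {f | (z, f) ∈ B}) :
    MeasurableSet {p : Z × H | p.2 ∈ Dstar ε {f | (p.1, f) ∈ B}} := by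
  have : {p : Z × H | p.2 ∈ Dstar ε {f | (p.1, f) ∈ B}} = B ∩ ⋂ V ∈ countableBasis H,
      ({z | ε < normDiam ({f | (z, f) ∈ B} ∩ V)} ×ˢ univ ∪ univ ×ˢ Vᶜ) := by
    ext ⟨z, f⟩
    simp [mem_Dstar_iff_countableBasis, imp_iff_or_not]
  rw [this]
  refine hB.inter (.biInter (countable_countableBasis H) fun V hV => .union ?_ ?_)
  · exact (measurableSet_setOf_lt_normDiam hε hB hsec (isOpen_of_mem_countableBasis hV)).prod .univ
  · exact MeasurableSet.univ.prod (isOpen_of_mem_countableBasis hV).measurableSet.compl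

end Derivative

section TransfiniteSequence

variable {Z : Type} (A : Set (Z × H)) (ε : ℝ)

lemma Aseq_zero : Aseq A ε 0 = A := Ordinal.limitRecOn_zero ..

lemma Aseq_add_one (ξ : Ordinal) :
    Aseq A ε (ξ + 1) = {p : Z × H | p.2 ∈ Dstar ε {f | (p.1, f) ∈ Aseq A ε ξ}} :=
  Ordinal.limitRecOn_add_one ..

lemma Aseq_limit {ξ : Ordinal} (hξ : Order.IsSuccLimit ξ) : Aseq A ε ξ = ⋂ ζ < ξ, Aseq A ε ζ :=
  Ordinal.limitRecOn_limit _ _ _ _ hξ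

lemma setOf_mem_Aseq (z : Z) (ξ : Ordinal) :
    {f | (z, f) ∈ Aseq A ε ξ} = derivIter (Dstar ε) {f | (z, f) ∈ A} ξ := by
  induction ξ using Ordinal.limitRecOn with
  | zero => rw [Aseq_zero, derivIter_zero]
  | add_one ξ ih => rw [Aseq_add_one, derivIter_add_one, ← ih]; rfl
  | limit ξ hξ ih =>
    ext f
    rw [Aseq_limit A ε hξ, derivIter_limit _ _ hξ]
    show (z, f) ∈ ⋂ ζ < ξ, _ ↔ _
    simp only [mem_iInter₂]
    exact forall₂_congr fun ζ hζ => Set.ext_iff.1 (ih ζ hζ) f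

lemma mem_Aseq_iff {z : Z} {f : H} {ξ : Ordinal} :
    (z, f) ∈ Aseq A ε ξ ↔ f ∈ derivIter (Dstar ε) {f | (z, f) ∈ A} ξ :=
  Set.ext_iff.1 (setOf_mem_Aseq A ε z ξ) f

lemma Aseq_antitone : Antitone (Aseq A ε) := fun _ _ h ⟨_, _⟩ hp =>
  (mem_Aseq_iff A ε).2 (derivIter_antitone (Dstar_subset ε) h ((mem_Aseq_iff A ε).1 hp))

lemma Aseq_subset (ξ : Ordinal) : Aseq A ε ξ ⊆ A := by
  simpa only [Aseq_zero] using Aseq_antitone A ε (zero_le (a := ξ))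

variable {A ε}

lemma isClosed_setOf_mem_Aseq (hA : ∀ z, IsClosed {f | (z, f) ∈ A}) (z : Z) (ξ : Ordinal) :
    IsClosed {f | (z, f) ∈ Aseq A ε ξ} :=
  setOf_mem_Aseq A ε z ξ ▸ isClosed_derivIter (fun _ => isClosed_Dstar) (hA z) ξ

lemma measurableSet_Aseq [TopologicalSpace Z] [PolishSpace Z] [MeasurableSpace Z] [BorelSpace Z]
    (hA : MeasurableSet A) (hsec : ∀ z, IsClosed {f | (z, f) ∈ A}) (hε : 0 ≤ ε) {ξ : Ordinal}
    (hξ : ξ.card ≤ Cardinal.aleph0) : MeasurableSet (Aseq A ε ξ) := by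
  induction ξ using Ordinal.limitRecOn with
  | zero => rwa [Aseq_zero]
  | add_one ξ ih =>
    rw [Aseq_add_one]
    exact measurableSet_setOf_mem_Dstar hε
      (ih ((Ordinal.card_le_card (le_add_right le_rfl)).trans hξ))
      fun z => isClosed_setOf_mem_Aseq hsec z ξ
  | limit ξ hlim ih =>
    rw [Aseq_limit A ε hlim]
    exact .biInter (Ordinal.countable_Iio hξ) fun ζ hζ =>
      ih ζ hζ ((Ordinal.card_le_card (le_of_lt hζ)).trans hξ)

end TransfiniteSequence

theorem Aseq_borel_sections_and_unique_rank_general (Z : Type) [MeasurableSpace Z]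
    [StandardBorelSpace Z]
    (A : Set (Z × H)) (hA : MeasurableSet A)
    (hcpt : ∀ z : Z, IsCompact {f : H | (z, f) ∈ A})
    (hsep : ∀ z : Z, NormSeparable {f : H | (z, f) ∈ A})
    (ε : ℝ) (hε : 0 < ε) :
    (∀ ξ : Ordinal, ξ.card ≤ Cardinal.aleph0 →
      MeasurableSet (Aseq A ε ξ) ∧ Aseq A ε ξ ⊆ A ∧
        ∀ z : Z, IsCompact {f : H | (z, f) ∈ Aseq A ε ξ} ∧
          {f : H | (z, f) ∈ Aseq A ε ξ} = derivIter (Dstar ε) {f : H | (z, f) ∈ A} ξ) ∧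
    (∀ p ∈ A, ∃! ξ : Ordinal, ξ.card ≤ Cardinal.aleph0 ∧
      p ∈ Aseq A ε ξ \ Aseq A ε (ξ + 1)) := by
  let := upgradeStandardBorel Z
  have hcl (z : Z) := (hcpt z).isClosed
  refine ⟨fun ξ hξ => ⟨measurableSet_Aseq hA hcl hε.le hξ, Aseq_subset A ε ξ, fun z =>
    ⟨(isClosed_setOf_mem_Aseq hcl z ξ).isCompact, setOf_mem_Aseq A ε z ξ⟩⟩, ?_⟩
  rintro ⟨z, f⟩ hzf
  obtain ⟨ξ, hξ, hempty⟩ := exists_derivIter_Dstar_eq_empty hε (hcpt z) (hsep z)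
  obtain ⟨η, hηξ, hη⟩ := exists_lt_mem_derivIter_diff (D := Dstar ε) (x := f) hzf
    (hempty ▸ notMem_empty f)
  refine ⟨η, ⟨(Ordinal.card_le_card hηξ.le).trans hξ, by simpa [mem_Aseq_iff] using hη⟩,
    fun η' ⟨_, hη'⟩ => (Aseq_antitone A ε).eq_of_mem_diff_add_one hη' ?_⟩
  simpa [mem_Aseq_iff] using hη

/-- **Claim in the proof of Proposition 2.** For `Z` standard Borel and `A ⊆ Z × H` Borel
with nonempty compact norm separable sections and `ε > 0`: (1) each `A^ξ` (for countable `ξ`)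
is a Borel subset of `A` whose sections are compact and equal to `𝔻_ε^{(ξ)}(A_z)`; and
(2) every `(z,f) ∈ A` lies in `A^ξ \ A^{ξ+1}` for a unique countable ordinal `ξ`. -/
theorem Aseq_borel_sections_and_unique_rank (Z : Type) [MeasurableSpace Z]
    [StandardBorelSpace Z]
    (A : Set (Z × H)) (hA : MeasurableSet A)
    (hne : ∀ z : Z, {f : H | (z, f) ∈ A}.Nonempty)
    (hcpt : ∀ z : Z, IsCompact {f : H | (z, f) ∈ A})
    (hsep : ∀ z : Z, NormSeparable {f : H | (z, f) ∈ A})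
    (ε : ℝ) (hε : 0 < ε) :
    (∀ ξ : Ordinal, ξ.card ≤ Cardinal.aleph0 →
      MeasurableSet (Aseq A ε ξ) ∧ Aseq A ε ξ ⊆ A ∧
        ∀ z : Z, IsCompact {f : H | (z, f) ∈ Aseq A ε ξ} ∧
          {f : H | (z, f) ∈ Aseq A ε ξ} = derivIter (Dstar ε) {f : H | (z, f) ∈ A} ξ) ∧
    (∀ p ∈ A, ∃! ξ : Ordinal, ξ.card ≤ Cardinal.aleph0 ∧
      p ∈ Aseq A ε ξ \ Aseq A ε (ξ + 1)) :=
  Aseq_borel_sections_and_unique_rank_general Z A hA hcpt hsep ε hε
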